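/- Let T be an (n,d)-regular rooted tree and τ a non-crossing partition. Then the number of rooted tree homomorphisms from graph(τ) to T equals n^{O(τ)} · d^{I(τ)}, where O(τ) and I(τ) are the numbers of outer and inner blocks of τ respectively. -/

import Mathlib

/-- A rooted subtree of the tree of alternating strings on alphabet `β`. -/
def IsRootedSubtree {β : Type*} (S : Set (List β)) : Prop :=
  (∀ s ∈ S, s.Chain' (· ≠ ·)) ∧ [] ∈ S ∧ ∀ s ∈ S, s.tail ∈ S

/-- Partitions of finite subsets of `ℕ`, given by their set of blocks. -/
abbrev Blocks : Type := Finset (Finset ℕ)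

/-- `π` is a non-crossing partition (of its ground set). -/
def IsNC (π : Blocks) : Prop :=
  (∀ B ∈ π, B.Nonempty) ∧
  (∀ B ∈ π, ∀ C ∈ π, B ≠ C → Disjoint B C) ∧
  (∀ B ∈ π, ∀ C ∈ π, B ≠ C →
    ¬ ∃ i₁ j₁ i₂ j₂ : ℕ, i₁ < j₁ ∧ j₁ < i₂ ∧ i₂ < j₂ ∧
      i₁ ∈ B ∧ i₂ ∈ B ∧ j₁ ∈ C ∧ j₂ ∈ C)

/-- `V` is nested inside `W`. -/
def NestedIn (V W : Finset ℕ) : Prop :=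
  ∃ j ∈ W, ∃ k ∈ W, ∀ x ∈ V, j < x ∧ x < k

/-- `V` is immediately nested inside `W`. -/
def ImmNested (π : Blocks) (V W : Finset ℕ) : Prop :=
  NestedIn V W ∧ ¬ ∃ X ∈ π, NestedIn V X ∧ NestedIn X W

/-- The depth of a block `V` in the nesting tree `graph(π)`. -/
noncomputable def blockDepth (π : Blocks) (V : Finset ℕ) : ℕ :=
  1 + {W : Finset ℕ | W ∈ π ∧ NestedIn V W}.ncard

/-- Number of outer blocks (depth 1, adjacent to the root of the nesting tree). -/
noncomputable def outerCount (π : Blocks) : ℕ :=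
  {V : Finset ℕ | V ∈ π ∧ ¬ ∃ W ∈ π, NestedIn V W}.ncard

/-- Number of inner blocks (depth ≥ 2). -/
noncomputable def innerCount (π : Blocks) : ℕ :=
  {V : Finset ℕ | V ∈ π ∧ ∃ W ∈ π, NestedIn V W}.ncard

/-- A rooted tree homomorphism `graph(π) → T`: it sends the root to the root,
preserves distance to the root, and sends the parent of a block to the parent
(deleting the first letter) of its image. -/
def IsRootedHom {β : Type*} (π : Blocks) (T : Set (List β))
    (φ : {V : Finset ℕ // V ∈ π} → List β) : Prop :=
  (∀ V, φ V ∈ T) ∧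
  (∀ V, (φ V).length = blockDepth π V.1) ∧
  (∀ V W : {V : Finset ℕ // V ∈ π}, ImmNested π V.1 W.1 → (φ V).tail = φ W)

/-!
Remove a block `V₀` of maximal depth: nothing is nested in it, so it is a leaf of `graph(π)`,
and a homomorphism on `π` is the same as a homomorphism `ψ` on `π.erase V₀` together with an
image of `V₀`. The admissible images are the children in `T` of the image of the parent of
`V₀`, i.e. of the root if `V₀` is outer (`n` choices) and of a vertex `ψ W₀ ≠ []` otherwise
(`d` choices). Non-crossingness makes the parent `W₀` unique: the blocks enclosing a block
are totally ordered by nesting. By induction the count is `∏ V ∈ π, (n or d)`.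
-/

theorem Nat.card_sigma_of_card_eq {ι : Type*} {F : ι → Type*} {c : ℕ}
    (h : ∀ i, Nat.card (F i) = c) : Nat.card (Σ i, F i) = Nat.card ι * c := by
  by_cases hinf : ∃ i, Infinite (F i)
  · obtain ⟨i, hi⟩ := hinf
    have : Infinite (Σ i, F i) := Infinite.of_injective (Sigma.mk i) sigma_mk_injective
    rw [Nat.card_eq_zero_of_infinite, ← h i, Nat.card_eq_zero_of_infinite (α := F i), mul_zero]
  have (i : ι) : Finite (F i) := not_infinite_iff_finite.mp fun hi => hinf ⟨i, hi⟩
  cases finite_or_infinite ι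
  · have := Fintype.ofFinite ι
    simp [Nat.card_sigma, h, Nat.card_eq_fintype_card]
  rcases Nat.eq_zero_or_pos c with rfl | hc
  · have (i : ι) : IsEmpty (F i) := Finite.card_eq_zero_iff.mp (h i)
    have : IsEmpty (Σ i, F i) := ⟨fun x => isEmptyElim x.2⟩
    simp
  · have (i : ι) : Nonempty (F i) := Nat.card_pos_iff.mp (h i ▸ hc) |>.1
    have : Infinite (Σ i, F i) :=
      Infinite.of_surjective Sigma.fst fun i => ⟨⟨i, Classical.arbitrary _⟩, rfl⟩
    simp

theorem Set.ncard_setOf_fst_mem_snd_mem {A B : Type*} (S : Set A) (F : A → Set B) {c : ℕ}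
    (h : ∀ a ∈ S, (F a).ncard = c) :
    {p : A × B | p.1 ∈ S ∧ p.2 ∈ F p.1}.ncard = S.ncard * c := by
  rw [← Nat.card_coe_set_eq, ← Nat.card_coe_set_eq,
    ← Nat.card_sigma_of_card_eq (F := fun a : S => F a) fun a => h a a.2]
  exact Nat.card_congr
    { toFun := fun p => ⟨⟨p.1.1, p.2.1⟩, ⟨p.1.2, p.2.2⟩⟩
      invFun := fun x => ⟨(x.1.1, x.2.1), x.1.2, x.2.2⟩
      left_inv := fun _ => rfl
      right_inv := fun _ => rfl }

def Finset.funEraseEquiv {ι α : Type*} [DecidableEq ι] {s : Finset ι} {i : ι} (hi : i ∈ s) :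
    ({x // x ∈ s} → α) ≃ ({x // x ∈ s.erase i} → α) × α where
  toFun f := (fun x => f ⟨x, Finset.mem_of_mem_erase x.2⟩, f ⟨i, hi⟩)
  invFun p x := if h : x.1 = i then p.2 else p.1 ⟨x, Finset.mem_erase.mpr ⟨h, x.2⟩⟩
  left_inv f := by
    funext ⟨x, hx⟩
    by_cases h : x = i
    · subst h; simp
    · simp [h]
  right_inv p := by
    ext x
    · simp [Finset.ne_of_mem_erase x.2]
    · simp

theorem ncard_setOf_tail_eq {β : Type*} (T : Set (List β)) (t : List β) :
    {s | s ∈ T ∧ s.length = t.length + 1 ∧ s.tail = t}.ncard = {j | j :: t ∈ T}.ncard := by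
  have : {s | s ∈ T ∧ s.length = t.length + 1 ∧ s.tail = t} = (· :: t) '' {j | j :: t ∈ T} := by
    ext (_ | ⟨j, s⟩)
    · simp
    · simp only [Set.mem_ofPred_eq, List.length_cons, List.tail_cons, Set.mem_image,
        List.cons.injEq]
      constructor
      · rintro ⟨hs, -, rfl⟩
        exact ⟨j, hs, rfl, rfl⟩
      · rintro ⟨j, hs, rfl, rfl⟩
        exact ⟨hs, rfl, rfl⟩
  rw [this, Set.ncard_image_of_injective _ fun _ _ h => (List.cons.inj h).1]

theorem NestedIn.trans {U V W : Finset ℕ} (h₁ : NestedIn U V) (h₂ : NestedIn V W) :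
    NestedIn U W := by
  obtain ⟨j, hj, k, hk, h⟩ := h₁
  obtain ⟨j', hj', k', hk', h'⟩ := h₂
  exact ⟨j', hj', k', hk', fun x hx =>
    ⟨(h' j hj).1.trans (h x hx).1, (h x hx).2.trans (h' k hk).2⟩⟩

theorem not_nestedIn_self (V : Finset ℕ) : ¬ NestedIn V V := by
  rintro ⟨j, hj, _, _, h⟩
  exact lt_irrefl j (h j hj).1

def IsInner (π : Blocks) (V : Finset ℕ) : Prop := ∃ W ∈ π, NestedIn V W

def IsLeaf (π : Blocks) (V : Finset ℕ) : Prop := ∀ X ∈ π, ¬ NestedIn X V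

def ancestors (π : Blocks) (V : Finset ℕ) : Set (Finset ℕ) := {W | W ∈ π ∧ NestedIn V W}

theorem blockDepth_eq (π : Blocks) (V : Finset ℕ) :
    blockDepth π V = 1 + (ancestors π V).ncard := rfl

theorem ancestors_finite (π : Blocks) (V : Finset ℕ) : (ancestors π V).Finite :=
  π.finite_toSet.subset fun _ h => h.1

section Nesting

variable {π : Blocks} {V W X : Finset ℕ}

theorem blockDepth_lt_of_nestedIn (hW : W ∈ π) (h : NestedIn V W) :
    blockDepth π W < blockDepth π V := by
  have hsub : ancestors π W ⊆ ancestors π V := fun X hX => ⟨hX.1, h.trans hX.2⟩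
  have hss : ancestors π W ⊂ ancestors π V :=
    (Set.ssubset_iff_of_subset hsub).mpr ⟨W, ⟨hW, h⟩, fun hWW => not_nestedIn_self W hWW.2⟩
  have := Set.ncard_lt_ncard hss (ancestors_finite π V)
  rw [blockDepth_eq, blockDepth_eq]
  omega

theorem exists_isLeaf (hπ : π.Nonempty) : ∃ V ∈ π, IsLeaf π V := by
  obtain ⟨V, hV, hmax⟩ := π.exists_max_image (blockDepth π) hπ
  exact ⟨V, hV, fun X hX hXV => (hmax X hX).not_gt (blockDepth_lt_of_nestedIn hV hXV)⟩

theorem IsInner.exists_immNested (h : IsInner π V) : ∃ W ∈ π, ImmNested π V W := by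
  obtain ⟨W, hW, hmax⟩ := Set.exists_max_image (ancestors π V) (blockDepth π)
    (ancestors_finite π V) h
  exact ⟨W, hW.1, hW.2, fun ⟨X, hX, hVX, hXW⟩ =>
    (hmax X ⟨hX, hVX⟩).not_gt (blockDepth_lt_of_nestedIn hW.1 hXW)⟩

theorem blockDepth_of_not_isInner (h : ¬ IsInner π V) :
    blockDepth π V = 1 := by
  have : ancestors π V = ∅ := Set.eq_empty_iff_forall_notMem.mpr fun W hW => h ⟨W, hW.1, hW.2⟩
  rw [blockDepth_eq, this, Set.ncard_empty]

end Nesting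

namespace IsNC

variable {π : Blocks} {V W X : Finset ℕ}

theorem subset {π π' : Blocks} (hnc : IsNC π) (h : π' ⊆ π) : IsNC π' :=
  ⟨fun B hB => hnc.1 B (h hB), fun B hB C hC => hnc.2.1 B (h hB) C (h hC),
    fun B hB C hC => hnc.2.2 B (h hB) C (h hC)⟩

theorem nestedIn_of_mem_between (hnc : IsNC π) {B C : Finset ℕ} (hB : B ∈ π) (hC : C ∈ π)
    (hBC : B ≠ C) {a b c : ℕ} (ha : a ∈ B) (hb : b ∈ B) (hc : c ∈ C) (hac : a < c) (hcb : c < b) :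
    NestedIn C B := by
  have hdisj := Finset.disjoint_left.mp (hnc.2.1 B hB C hC hBC)
  refine ⟨a, ha, b, hb, fun y hy => ⟨?_, ?_⟩⟩
  · refine lt_of_le_of_ne (not_lt.mp fun hya => ?_) fun h => hdisj ha (h ▸ hy)
    exact hnc.2.2 C hC B hB hBC.symm ⟨y, a, c, b, hya, hac, hcb, hy, hc, ha, hb⟩
  · refine lt_of_le_of_ne (not_lt.mp fun hby => ?_) fun h => hdisj hb (h ▸ hy)
    exact hnc.2.2 B hB C hC hBC ⟨a, c, b, y, hac, hcb, hby, ha, hb, hc, hy⟩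

theorem nestedIn_total (hnc : IsNC π) {W₁ W₂ : Finset ℕ} (hV : V ∈ π) (hW₁ : W₁ ∈ π)
    (hW₂ : W₂ ∈ π) (hne : W₁ ≠ W₂) (h₁ : NestedIn V W₁) (h₂ : NestedIn V W₂) :
    NestedIn W₁ W₂ ∨ NestedIn W₂ W₁ := by
  obtain ⟨x, hx⟩ := hnc.1 V hV
  obtain ⟨j₁, hj₁, k₁, hk₁, h₁⟩ := h₁
  obtain ⟨j₂, hj₂, k₂, hk₂, h₂⟩ := h₂
  rcases lt_trichotomy j₁ j₂ with h | rfl | h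
  · exact .inr (hnc.nestedIn_of_mem_between hW₁ hW₂ hne hj₁ hk₁ hj₂ h
      ((h₂ x hx).1.trans (h₁ x hx).2))
  · exact (Finset.disjoint_left.mp (hnc.2.1 _ hW₁ _ hW₂ hne) hj₁ hj₂).elim
  · exact .inl (hnc.nestedIn_of_mem_between hW₂ hW₁ hne.symm hj₂ hk₂ hj₁ h
      ((h₁ x hx).1.trans (h₂ x hx).2))

theorem nestedIn_of_immNested (hnc : IsNC π) (hV : V ∈ π) (hW : W ∈ π)
    (himm : ImmNested π V W) (hX : X ∈ π) (hVX : NestedIn V X) (hne : X ≠ W) : NestedIn W X :=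
  (hnc.nestedIn_total hV hX hW hne hVX himm.1).resolve_left fun hXW => himm.2 ⟨X, hX, hVX, hXW⟩

theorem immNested_unique (hnc : IsNC π) {W₁ W₂ : Finset ℕ} (hV : V ∈ π) (hW₁ : W₁ ∈ π)
    (hW₂ : W₂ ∈ π) (h₁ : ImmNested π V W₁) (h₂ : ImmNested π V W₂) : W₁ = W₂ := by
  by_contra hne
  exact h₁.2 ⟨W₂, hW₂, h₂.1, hnc.nestedIn_of_immNested hV hW₂ h₂ hW₁ h₁.1 hne⟩

theorem blockDepth_of_immNested (hnc : IsNC π) (hV : V ∈ π) (hW : W ∈ π)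
    (himm : ImmNested π V W) : blockDepth π V = blockDepth π W + 1 := by
  have hanc : ancestors π V = insert W (ancestors π W) := by
    ext X
    constructor
    · rintro ⟨hX, hVX⟩
      by_cases hXW : X = W
      · exact .inl hXW
      · exact .inr ⟨hX, hnc.nestedIn_of_immNested hV hW himm hX hVX hXW⟩
    · rintro (rfl | ⟨hX, hWX⟩)
      exacts [⟨hW, himm.1⟩, ⟨hX, himm.1.trans hWX⟩]
  rw [blockDepth_eq, blockDepth_eq, hanc,
    Set.ncard_insert_of_notMem (fun h => not_nestedIn_self W h.2) (ancestors_finite π W)]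
  omega

end IsNC

section EraseLeaf

variable {π : Blocks} {V₀ V W : Finset ℕ}

theorem mem_erase_of_nestedIn (hleaf : IsLeaf π V₀) (hV : V ∈ π) (hW : W ∈ π)
    (h : NestedIn V W) : W ∈ π.erase V₀ :=
  Finset.mem_erase.mpr ⟨by rintro rfl; exact hleaf V hV h, hW⟩

theorem blockDepth_erase_of_leaf (hleaf : IsLeaf π V₀) (hV : V ∈ π) :
    blockDepth (π.erase V₀) V = blockDepth π V := by
  have : ancestors (π.erase V₀) V = ancestors π V := Set.ext fun W =>
    ⟨fun h => ⟨Finset.mem_of_mem_erase h.1, h.2⟩,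
      fun h => ⟨mem_erase_of_nestedIn hleaf hV h.1 h.2, h.2⟩⟩
  rw [blockDepth_eq, blockDepth_eq, this]

theorem isInner_erase_of_leaf (hleaf : IsLeaf π V₀) (hV : V ∈ π) :
    IsInner (π.erase V₀) V ↔ IsInner π V :=
  ⟨fun ⟨W, hW, h⟩ => ⟨W, Finset.mem_of_mem_erase hW, h⟩,
    fun ⟨W, hW, h⟩ => ⟨W, mem_erase_of_nestedIn hleaf hV hW h, h⟩⟩

theorem immNested_erase_of_leaf (hleaf : IsLeaf π V₀) (hV : V ∈ π) :
    ImmNested (π.erase V₀) V W ↔ ImmNested π V W :=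
  and_congr_right' <| not_congr
    ⟨fun ⟨X, hX, h⟩ => ⟨X, Finset.mem_of_mem_erase hX, h⟩,
      fun ⟨X, hX, h⟩ => ⟨X, mem_erase_of_nestedIn hleaf hV hX h.1, h⟩⟩

end EraseLeaf

open Classical in
theorem pow_outerCount_mul_pow_innerCount (π : Blocks) (n d : ℕ) :
    n ^ outerCount π * d ^ innerCount π = ∏ V ∈ π, if IsInner π V then d else n := by
  rw [Finset.prod_ite, Finset.prod_const, Finset.prod_const, mul_comm]
  congr <;> rw [← Set.ncard_coe_finset, Finset.coe_filter] <;> rfl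

section Counting

variable {β : Type*} (T : Set (List β)) {π : Blocks} {V₀ : Finset ℕ}

def leafExtensions (π : Blocks) (V₀ : Finset ℕ) (ψ : {V // V ∈ π.erase V₀} → List β) :
    Set (List β) :=
  {s | s ∈ T ∧ s.length = blockDepth π V₀ ∧ ∀ W, ImmNested π V₀ W.1 → s.tail = ψ W}

theorem isRootedHom_iff_funEraseEquiv (h₀ : V₀ ∈ π) (hleaf : IsLeaf π V₀)
    (φ : {V // V ∈ π} → List β) :
    IsRootedHom π T φ ↔ IsRootedHom (π.erase V₀) T (Finset.funEraseEquiv h₀ φ).1 ∧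
      (Finset.funEraseEquiv h₀ φ).2 ∈ leafExtensions T π V₀ (Finset.funEraseEquiv h₀ φ).1 := by
  have hφ (V : {V // V ∈ π}) (h : V.1 ≠ V₀) :
      φ V = (Finset.funEraseEquiv h₀ φ).1 ⟨V, Finset.mem_erase.mpr ⟨h, V.2⟩⟩ := rfl
  have hφ₀ (V : {V // V ∈ π}) (h : V.1 = V₀) : φ V = (Finset.funEraseEquiv h₀ φ).2 := by
    obtain ⟨V, hV⟩ := V
    subst h
    rfl
  constructor
  · rintro ⟨hT, hlen, htail⟩
    refine ⟨⟨fun V => hT _, fun V => ?_, fun V W h => htail _ _ ?_⟩, hT _, hlen _,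
      fun W h => htail _ _ h⟩
    · exact (hlen _).trans (blockDepth_erase_of_leaf hleaf (Finset.mem_of_mem_erase V.2)).symm
    · exact (immNested_erase_of_leaf hleaf (Finset.mem_of_mem_erase V.2)).mp h
  · rintro ⟨⟨hT, hlen, htail⟩, hT₀, hlen₀, htail₀⟩
    refine ⟨fun V => ?_, fun V => ?_, fun V W h => ?_⟩
    · by_cases hV : V.1 = V₀
      · rw [hφ₀ V hV]; exact hT₀
      · rw [hφ V hV]; exact hT _
    · by_cases hV : V.1 = V₀
      · rw [hφ₀ V hV, hlen₀, hV]
      · rw [hφ V hV, hlen, blockDepth_erase_of_leaf hleaf V.2]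
    · have hW : W.1 ≠ V₀ := by rintro hW; exact hleaf V.1 V.2 (hW ▸ h.1)
      rw [hφ W hW]
      by_cases hV : V.1 = V₀
      · rw [hφ₀ V hV]; exact htail₀ _ (hV ▸ h)
      · rw [hφ V hV]; exact htail _ _ ((immNested_erase_of_leaf hleaf V.2).mpr h)

theorem ncard_isRootedHom_eq_mul_of_leaf (h₀ : V₀ ∈ π) (hleaf : IsLeaf π V₀)
    {c : ℕ} (hc : ∀ ψ, IsRootedHom (π.erase V₀) T ψ → (leafExtensions T π V₀ ψ).ncard = c) :
    {φ | IsRootedHom π T φ}.ncard = {ψ | IsRootedHom (π.erase V₀) T ψ}.ncard * c := by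
  have himage : Finset.funEraseEquiv h₀ '' {φ | IsRootedHom π T φ} =
      {p | p.1 ∈ {ψ | IsRootedHom (π.erase V₀) T ψ} ∧ p.2 ∈ leafExtensions T π V₀ p.1} := by
    ext p
    simpa using isRootedHom_iff_funEraseEquiv T h₀ hleaf ((Finset.funEraseEquiv h₀).symm p)
  rw [← Set.ncard_image_of_injective _ (Finset.funEraseEquiv h₀).injective, himage]
  exact Set.ncard_setOf_fst_mem_snd_mem _ _ hc

theorem leafExtensions_of_not_isInner (h : ¬ IsInner π V₀) (ψ : {V // V ∈ π.erase V₀} → List β) :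
    leafExtensions T π V₀ ψ = {s | s ∈ T ∧ s.length = ([] : List β).length + 1 ∧ s.tail = []} := by
  have hnone (W : {V // V ∈ π.erase V₀}) : ¬ ImmNested π V₀ W :=
    fun hW => h ⟨W, Finset.mem_of_mem_erase W.2, hW.1⟩
  ext (_ | ⟨j, s⟩) <;> simp [leafExtensions, blockDepth_of_not_isInner h, hnone]

theorem leafExtensions_of_immNested (hnc : IsNC π) (h₀ : V₀ ∈ π) (hleaf : IsLeaf π V₀)
    (W₀ : {V // V ∈ π.erase V₀}) (himm : ImmNested π V₀ W₀) (ψ : {V // V ∈ π.erase V₀} → List β)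
    (hψ : IsRootedHom (π.erase V₀) T ψ) :
    leafExtensions T π V₀ ψ = {s | s ∈ T ∧ s.length = (ψ W₀).length + 1 ∧ s.tail = ψ W₀} := by
  have hW₀ := Finset.mem_of_mem_erase W₀.2
  have hlen : (ψ W₀).length + 1 = blockDepth π V₀ := by
    rw [hψ.2.1, blockDepth_erase_of_leaf hleaf hW₀, hnc.blockDepth_of_immNested h₀ hW₀ himm]
  ext s
  simp only [leafExtensions, Set.mem_ofPred_eq, hlen]
  refine and_congr_right' (and_congr_right' ⟨fun h => h _ himm, fun h W hW => ?_⟩)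
  rw [h]
  congr 1
  exact Subtype.ext (hnc.immNested_unique h₀ hW₀ (Finset.mem_of_mem_erase W.2) himm hW)

open Classical in
theorem ncard_leafExtensions {n d : ℕ} (hroot : {j : β | [j] ∈ T}.ncard = n)
    (hreg : ∀ s ∈ T, s ≠ [] → {j : β | j :: s ∈ T}.ncard = d) (hnc : IsNC π) (h₀ : V₀ ∈ π)
    (hleaf : IsLeaf π V₀) (ψ : {V // V ∈ π.erase V₀} → List β)
    (hψ : IsRootedHom (π.erase V₀) T ψ) :
    (leafExtensions T π V₀ ψ).ncard = if IsInner π V₀ then d else n := by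
  split_ifs with hV₀
  · obtain ⟨W₀, hW₀, himm⟩ := hV₀.exists_immNested
    rw [leafExtensions_of_immNested T hnc h₀ hleaf ⟨W₀, mem_erase_of_nestedIn hleaf h₀ hW₀ himm.1⟩
      himm ψ hψ, ncard_setOf_tail_eq]
    refine hreg _ (hψ.1 _) (List.ne_nil_of_length_pos ?_)
    rw [hψ.2.1, blockDepth_eq]
    omega
  · rw [leafExtensions_of_not_isInner T hV₀, ncard_setOf_tail_eq]
    exact hroot

open Classical in
theorem ncard_isRootedHom_eq_prod {n d : ℕ} (hroot : {j : β | [j] ∈ T}.ncard = n)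
    (hreg : ∀ s ∈ T, s ≠ [] → {j : β | j :: s ∈ T}.ncard = d) (π : Blocks) (hnc : IsNC π) :
    {φ | IsRootedHom π T φ}.ncard = ∏ V ∈ π, if IsInner π V then d else n := by
  induction π using Finset.strongInduction with
  | H π ih =>
  rcases π.eq_empty_or_nonempty with rfl | hπ
  · simp [IsRootedHom]
  obtain ⟨V₀, h₀, hleaf⟩ := exists_isLeaf hπ
  rw [ncard_isRootedHom_eq_mul_of_leaf T h₀ hleaf
      (ncard_leafExtensions T hroot hreg hnc h₀ hleaf),
    ih _ (Finset.erase_ssubset h₀) (hnc.subset (Finset.erase_subset V₀ π)),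
    ← Finset.prod_erase_mul _ _ h₀]
  congr 1
  exact Finset.prod_congr rfl fun V hV => by
    rw [isInner_erase_of_leaf hleaf (Finset.mem_of_mem_erase hV)]

end Counting

theorem stmt8_general {β : Type*} (T : Set (List β)) (n d : ℕ)
    (hroot : {j : β | [j] ∈ T}.ncard = n)
    (hreg : ∀ s ∈ T, s ≠ [] → {j : β | j :: s ∈ T}.ncard = d)
    (π : Blocks) (hnc : IsNC π) :
    {φ : {V : Finset ℕ // V ∈ π} → List β | IsRootedHom π T φ}.ncard
      = n ^ outerCount π * d ^ innerCount π := by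
  rw [pow_outerCount_mul_pow_innerCount, ncard_isRootedHom_eq_prod T hroot hreg π hnc]

/-- For an `(n,d)`-regular rooted tree `T` (the root has exactly `n` children and
every other vertex exactly `d` children) and a non-crossing partition `π`, the
number of rooted tree homomorphisms `graph(π) → T` is `n^{O(π)} · d^{I(π)}`. -/
theorem stmt8 {β : Type*} (T : Set (List β)) (hT : IsRootedSubtree T) (n d : ℕ)
    (hroot : {j : β | [j] ∈ T}.ncard = n)
    (hreg : ∀ s ∈ T, s ≠ [] → {j : β | j :: s ∈ T}.ncard = d)
    (π : Blocks) (hnc : IsNC π) :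
    {φ : {V : Finset ℕ // V ∈ π} → List β | IsRootedHom π T φ}.ncard
      = n ^ outerCount π * d ^ innerCount π :=
  stmt8_general T n d hroot hreg π hnc
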